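/- Let ζ > 0 and define F(ν) = ν² + ζ² − (π/4) (L_{1/2}(−(ν²+ζ²)))², where L_{1/2}(−x) = e^{−x/2}[(1+x)I_0(x/2) + x I_1(x/2)]. Then F has a unique global minimum at ν = 0 over ν ≥ 0; in particular F'(ν) > 0 for ν > 0. -/

import Mathlib

/-- Modified Bessel function of the first kind of order 0, via its power series. -/
noncomputable def besselI0 (x : ℝ) : ℝ :=
  ∑' m : ℕ, (x / 2) ^ (2 * m) / ((Nat.factorial m : ℝ) ^ 2)

/-- Modified Bessel function of the first kind of order 1, via its power series. -/
noncomputable def besselI1 (x : ℝ) : ℝ :=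
  ∑' m : ℕ, (x / 2) ^ (2 * m + 1) / ((Nat.factorial m : ℝ) * (Nat.factorial (m + 1) : ℝ))

/-- x ↦ L_{1/2}(−x) = e^{−x/2}[(1+x)I_0(x/2) + x I_1(x/2)]. -/
noncomputable def LhalfNeg (x : ℝ) : ℝ :=
  Real.exp (-x / 2) * ((1 + x) * besselI0 (x / 2) + x * besselI1 (x / 2))

/-- F(ν) = ν² + ζ² − (π/4) (L_{1/2}(−(ν²+ζ²)))². -/
noncomputable def Ffun (ζ ν : ℝ) : ℝ :=
  ν ^ 2 + ζ ^ 2 - Real.pi / 4 * (LhalfNeg (ν ^ 2 + ζ ^ 2)) ^ 2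

open Filter Finset Real
open scoped Nat Topology

/-!
`Ffun ζ ν = G (ν² + ζ²)` with `G ρ = ρ - (π/4) L(ρ)²`, and `L' = P` because `I₀' = I₁` and
`(x I₁)' = x I₀`; hence `F'(ν) = 2ν (1 - Q(ν² + ζ²))` and everything reduces to `Q(ρ) < 1`.
With `x = ρ/2` this reads `(I₀ + I₁)(I₀ + 2x(I₀ + I₁)) < (4/π) e^{2x}`. Multiplying out the
Bessel series (Cauchy products summed by Vandermonde's identity), the left side is
`∑ κ_{⌈n/2⌉} (2x)ⁿ / n!` with `κ_m = (4m+1) C(2m,m)² / 16^m = (4m+1) / ((2m+1) W_m)`, `W_m` the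
Wallis product. By Wallis' formula `κ_m` increases strictly to `4/π`, so the series is termwise
below `(4/π) ∑ (2x)ⁿ / n!`, strictly so at `n = 0`.
-/

lemma HasSum.add_shift {α : Type*} [AddCommGroup α] [TopologicalSpace α]
    [IsTopologicalAddGroup α] {f g u : ℕ → α} {a b : α} (hg : HasSum g a) (hu : HasSum u b)
    (h0 : f 0 = g 0) (hsucc : ∀ k, f (k + 1) = g (k + 1) + u k) : HasSum f (a + b) := by
  have hdiff : HasSum (fun k => f (k + 1) - g (k + 1)) b := by
    simpa only [hsucc, add_sub_cancel_left] using hu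
  have hdiff' : HasSum (fun k => f k - g k) b := by
    simpa only [h0, sub_self, _root_.zero_add] using
      HasSum.zero_add (f := fun k => f k - g k) hdiff
  rw [show f = fun k => g k + (f k - g k) by ext; abel]
  exact hg.add hdiff'

lemma hasDerivAt_tsum_mul_pow {c : ℕ → ℝ} {e : ℕ → ℕ}
    (hc : ∀ r, Summable fun m => ‖c m * r ^ e m‖) (y : ℝ) :
    HasDerivAt (fun y => ∑' m, c m * y ^ e m) (∑' m, c m * (e m * y ^ (e m - 1))) y := by
  set R := |y| + 1
  have hR : 1 ≤ R := le_add_of_nonneg_left (abs_nonneg y)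
  have hyR : y ∈ Set.Ioo (-R) R := abs_lt.mp (lt_add_one _)
  refine hasDerivAt_tsum_of_isPreconnected (hc (2 * R)) isOpen_Ioo isPreconnected_Ioo
    (fun m z _ => (hasDerivAt_pow (e m) z).const_mul (c m)) (fun m z hzR => ?_) hyR
    (hc y).of_norm hyR
  -- on `|z| < R` with `R ≥ 1`, `e |z|^(e-1) ≤ (2R)^e`: dominated by the series at `2R`
  have hz : |z| ≤ R := (abs_lt.mpr hzR).le
  have he : (e m : ℝ) ≤ 2 ^ e m := mod_cast (Nat.lt_two_pow_self).le
  calc ‖c m * (e m * z ^ (e m - 1))‖ = |c m| * (e m * |z| ^ (e m - 1)) := by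
        simp only [norm_mul, norm_pow, Real.norm_eq_abs, Nat.abs_cast]
    _ ≤ |c m| * (2 ^ e m * R ^ e m) := by
        gcongr
        calc |z| ^ (e m - 1) ≤ R ^ (e m - 1) := by gcongr
          _ ≤ R ^ e m := pow_le_pow_right₀ hR (Nat.sub_le _ _)
    _ = ‖c m * (2 * R) ^ e m‖ := by
        rw [norm_mul, Real.norm_eq_abs, Real.norm_of_nonneg (by positivity), mul_pow]

/-- `I_p(x) = ∑ₘ besselTerm p m (x / 2)`. -/
noncomputable def besselTerm (p m : ℕ) (y : ℝ) : ℝ := y ^ (2 * m + p) / (m ! * (m + p)! : ℝ)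

lemma abs_besselTerm_le (p m : ℕ) (y : ℝ) :
    |besselTerm p m y| ≤ |y| ^ p * ((y ^ 2) ^ m / m !) := by
  have hm : (1 : ℝ) ≤ (m + p)! := mod_cast (m + p).factorial_pos
  rw [besselTerm, abs_div, abs_of_pos (by positivity : (0 : ℝ) < m ! * (m + p)!), abs_pow,
    pow_add, pow_mul, sq_abs, mul_div_assoc', mul_comm (|y| ^ p)]
  gcongr
  exact le_mul_of_one_le_right (by positivity) hm

lemma summable_norm_besselTerm (p : ℕ) (y : ℝ) : Summable fun m => ‖besselTerm p m y‖ :=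
  .of_nonneg_of_le (fun _ => norm_nonneg _) (abs_besselTerm_le p · y)
    ((Real.summable_pow_div_factorial _).mul_left _)

lemma besselI0_eq_tsum (x : ℝ) : besselI0 x = ∑' m, besselTerm 0 m (x / 2) := by
  simp [besselI0, besselTerm, sq]

lemma besselI1_eq_tsum (x : ℝ) : besselI1 x = ∑' m, besselTerm 1 m (x / 2) := rfl

lemma hasSum_besselTerm_one (x : ℝ) : HasSum (fun m => besselTerm 1 m (x / 2)) (besselI1 x) :=
  (summable_norm_besselTerm 1 _).of_norm.hasSum

lemma sum_antidiagonal_inv_factorial (p q k : ℕ) :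
    ∑ ij ∈ antidiagonal k, ((ij.1 ! * (ij.1 + p)! : ℝ) * (ij.2 ! * (ij.2 + q)!))⁻¹ =
      (2 * k + p + q)! / (k ! * (k + p + q)! * (k + p)! * (k + q)!) := by
  have hchoose : ((2 * k + p + q).choose k : ℝ) =
      ∑ ij ∈ antidiagonal k, ((k + q).choose ij.1 : ℝ) * (k + p).choose ij.2 := by
    rw [show 2 * k + p + q = (k + q) + (k + p) by ring, Nat.add_choose_eq]
    push_cast; rfl
  rw [show ((2 * k + p + q)! / (k ! * (k + p + q)! * (k + p)! * (k + q)!) : ℝ) =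
      (2 * k + p + q).choose k / ((k + p)! * (k + q)!) by
    rw [Nat.cast_choose ℝ (by omega), show 2 * k + p + q - k = k + p + q by omega]
    field_simp, hchoose, sum_div]
  refine sum_congr rfl fun ⟨i, j⟩ hij => ?_
  rw [HasAntidiagonal.mem_antidiagonal] at hij
  subst hij
  rw [Nat.cast_choose ℝ (by omega : i ≤ i + j + q), Nat.cast_choose ℝ (by omega : j ≤ i + j + p),
    show i + j + q - i = j + q by omega, show i + j + p - j = i + p by omega]
  field_simp

lemma hasSum_besselTerm_mul (p q : ℕ) (y : ℝ) :
    HasSum (fun k => (2 * k + p + q)! / (k ! * (k + p + q)! * (k + p)! * (k + q)! : ℝ) *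
        y ^ (2 * k + p + q))
      ((∑' m, besselTerm p m y) * ∑' m, besselTerm q m y) := by
  have hp := summable_norm_besselTerm p y
  have hq := summable_norm_besselTerm q y
  have hcauchy : ∀ k, (2 * k + p + q)! / (k ! * (k + p + q)! * (k + p)! * (k + q)! : ℝ) *
      y ^ (2 * k + p + q) = ∑ ij ∈ antidiagonal k, besselTerm p ij.1 y * besselTerm q ij.2 y := by
    intro k
    rw [← sum_antidiagonal_inv_factorial, sum_mul]
    refine sum_congr rfl fun ⟨i, j⟩ hij => ?_
    rw [HasAntidiagonal.mem_antidiagonal] at hij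
    subst hij
    rw [besselTerm, besselTerm, show 2 * (i + j) + p + q = (2 * i + p) + (2 * j + q) by ring,
      pow_add]
    field_simp
  simp only [hcauchy]
  rw [tsum_mul_tsum_eq_tsum_sum_antidiagonal_of_summable_norm hp hq]
  exact (summable_norm_sum_mul_antidiagonal_of_summable_norm hp hq).of_norm.hasSum

noncomputable def wallisRatio (m : ℕ) : ℝ := (4 * m + 1) / ((2 * m + 1) * Real.Wallis.W m)

lemma wallisRatio_eq (m : ℕ) :
    wallisRatio m = (4 * m + 1) * (2 * m)! ^ 2 / (2 ^ (4 * m) * m ! ^ 4) := by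
  rw [wallisRatio, Real.Wallis.W_eq_factorial_ratio]
  field_simp

lemma wallisRatio_strictMono : StrictMono wallisRatio := by
  refine strictMono_nat_of_lt_succ fun m => ?_
  have hW := Real.Wallis.W_pos m
  rw [wallisRatio, wallisRatio, Real.Wallis.W_succ,
    div_lt_div_iff₀ (by positivity) (by positivity)]
  push_cast
  field_simp
  nlinarith

lemma tendsto_wallisRatio : Tendsto wallisRatio atTop (𝓝 (4 / π)) := by
  have hlin := tendsto_add_mul_div_add_mul_atTop_nhds (1 : ℝ) 1 4 two_ne_zero
  convert hlin.div Real.Wallis.tendsto_W_nhds_pi_div_two (by positivity) using 1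
  · ext m; rw [wallisRatio, Pi.div_apply, div_div, add_comm (1 : ℝ), add_comm (1 : ℝ)]
  · field_simp

lemma wallisRatio_lt (m : ℕ) : wallisRatio m < 4 / π :=
  (wallisRatio_strictMono m.lt_succ_self).trans_le
    (wallisRatio_strictMono.monotone.ge_of_tendsto tendsto_wallisRatio _)

lemma hasSum_besselI_product (x : ℝ) :
    HasSum (fun n => wallisRatio ((n + 1) / 2) * (2 * x) ^ n / n !)
      ((besselI0 x + besselI1 x) * (besselI0 x + 2 * x * (besselI0 x + besselI1 x))) := by
  have h00 := hasSum_besselTerm_mul 0 0 (x / 2)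
  have h01 := hasSum_besselTerm_mul 0 1 (x / 2)
  have h11 := hasSum_besselTerm_mul 1 1 (x / 2)
  rw [← besselI0_eq_tsum] at h00 h01
  rw [← besselI1_eq_tsum] at h01 h11
  have heven : HasSum (fun k => wallisRatio ((2 * k + 1) / 2) * (2 * x) ^ (2 * k) / (2 * k)!)
      (besselI0 x * besselI0 x + 4 * x * (besselI0 x * besselI1 x)) := by
    refine h00.add_shift (h01.mul_left (4 * x)) ?_ fun k => ?_
    · simp [wallisRatio, Real.Wallis.W]
    · rw [show (2 * (k + 1) + 1) / 2 = k + 1 by omega, wallisRatio_eq]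
      simp only [add_zero, mul_add, mul_one, Nat.factorial_succ, div_pow, mul_pow]
      push_cast
      field_simp
      ring
  have hodd : HasSum
      (fun k => wallisRatio ((2 * k + 1 + 1) / 2) * (2 * x) ^ (2 * k + 1) / (2 * k + 1)!)
      (besselI0 x * besselI1 x + 2 * x * (besselI0 x * besselI0 x) +
        2 * x * (besselI1 x * besselI1 x)) := by
    refine (h01.add (h00.mul_left (2 * x))).add_shift (h11.mul_left (2 * x)) ?_ fun k => ?_
    · norm_num [wallisRatio, Real.Wallis.W]
      ring
    · rw [show (2 * (k + 1) + 1 + 1) / 2 = k + 1 + 1 by omega, wallisRatio_eq]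
      simp only [add_zero, mul_add, mul_one, Nat.factorial_succ, div_pow, mul_pow]
      push_cast
      field_simp
      ring
  rw [show (besselI0 x + besselI1 x) * (besselI0 x + 2 * x * (besselI0 x + besselI1 x)) =
      besselI0 x * besselI0 x + 4 * x * (besselI0 x * besselI1 x) +
        (besselI0 x * besselI1 x + 2 * x * (besselI0 x * besselI0 x) +
          2 * x * (besselI1 x * besselI1 x)) by ring]
  exact HasSum.even_add_odd (f := fun n => wallisRatio ((n + 1) / 2) * (2 * x) ^ n / n !)
    heven hodd

lemma besselI_product_lt {x : ℝ} (hx : 0 ≤ x) :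
    (besselI0 x + besselI1 x) * (besselI0 x + 2 * x * (besselI0 x + besselI1 x)) <
      4 / π * exp (2 * x) := by
  have hexp : HasSum (fun n => 4 / π * ((2 * x) ^ n / n !)) (4 / π * exp (2 * x)) := by
    rw [Real.exp_eq_exp_ℝ]
    exact (NormedSpace.expSeries_div_hasSum_exp (2 * x)).mul_left _
  refine hasSum_lt (i := 0) (fun n => ?_) ?_ (hasSum_besselI_product x) hexp
  · rw [mul_div_assoc]
    exact mul_le_mul_of_nonneg_right (wallisRatio_lt _).le (by positivity)
  · simpa using wallisRatio_lt 0

lemma hasDerivAt_besselI0 (x : ℝ) : HasDerivAt besselI0 (besselI1 x) x := by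
  set c : ℕ → ℝ := fun m => ((m ! : ℝ) * m !)⁻¹ with hc
  have hterm : ∀ m y, c m * y ^ (2 * m) = besselTerm 0 m y := fun m y => by
    simp [c, besselTerm, div_eq_inv_mul]
  have hI0 : besselI0 = fun x => ∑' m, c m * (x / 2) ^ (2 * m) := by
    ext x; simp only [hterm, besselI0_eq_tsum]
  have hderiv :
      HasSum (fun m => c m * ((2 * m : ℕ) * (x / 2) ^ (2 * m - 1))) (2 * besselI1 x) := by
    have hshift := ((hasSum_besselTerm_one x).mul_left 2).congr_fun
      (g := fun m => c (m + 1) * ((2 * (m + 1) : ℕ) * (x / 2) ^ (2 * (m + 1) - 1))) fun m => by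
        rw [show 2 * (m + 1) - 1 = 2 * m + 1 by omega, besselTerm, hc]
        simp only [Nat.factorial_succ]
        push_cast
        field_simp
    simpa using
      HasSum.zero_add (f := fun m => c m * ((2 * m : ℕ) * (x / 2) ^ (2 * m - 1))) hshift
  have hsum (r : ℝ) : Summable fun m => ‖c m * r ^ (2 * m)‖ := by
    simpa only [hterm] using summable_norm_besselTerm 0 r
  have := (hasDerivAt_tsum_mul_pow (e := (2 * ·)) hsum (x / 2)).comp x
    ((hasDerivAt_id x).div_const 2)
  rw [hI0]
  exact this.congr_deriv (by rw [hderiv.tsum_eq]; ring)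

lemma hasDerivAt_mul_besselI1 (x : ℝ) :
    HasDerivAt (fun x => x * besselI1 x) (x * besselI0 x) x := by
  set c : ℕ → ℝ := fun m => 2 * ((m ! : ℝ) * (m + 1)!)⁻¹ with hc
  have hterm : ∀ m y, c m * y ^ (2 * m + 2) = 2 * y * besselTerm 1 m y := fun m y => by
    rw [hc, besselTerm]
    ring
  have hfun : (fun x => x * besselI1 x) = fun x => ∑' m, c m * (x / 2) ^ (2 * m + 2) := by
    ext x
    simp only [hterm, besselI1_eq_tsum, tsum_mul_left]
    ring
  have hsum (r : ℝ) : Summable fun m => ‖c m * r ^ (2 * m + 2)‖ := by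
    simpa only [hterm, norm_mul] using (summable_norm_besselTerm 1 r).mul_left ‖2 * r‖
  have := (hasDerivAt_tsum_mul_pow hsum (x / 2)).comp x ((hasDerivAt_id x).div_const 2)
  rw [hfun]
  refine this.congr_deriv ?_
  rw [besselI0_eq_tsum, ← tsum_mul_left, ← tsum_mul_right]
  refine tsum_congr fun m => ?_
  rw [show 2 * m + 2 - 1 = 2 * m + 1 by omega]
  simp only [hc, besselTerm, add_zero, Nat.factorial_succ]
  push_cast
  field_simp
  ring

noncomputable def Pfun (ρ : ℝ) : ℝ := exp (-ρ / 2) * (besselI0 (ρ / 2) + besselI1 (ρ / 2)) / 2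

noncomputable def Qfun (ρ : ℝ) : ℝ := π / 2 * LhalfNeg ρ * Pfun ρ

lemma hasDerivAt_LhalfNeg (x : ℝ) : HasDerivAt LhalfNeg (Pfun x) x := by
  have hhalf : HasDerivAt (· / 2) (1 / 2 : ℝ) x := (hasDerivAt_id x).div_const 2
  have hI0 := (hasDerivAt_besselI0 (x / 2)).comp x hhalf
  have hI1 := (hasDerivAt_mul_besselI1 (x / 2)).comp x hhalf
  have hexp := ((hasDerivAt_neg x).div_const 2).exp
  have hL := hexp.mul ((((hasDerivAt_id x).const_add 1).mul hI0).add (hI1.const_mul 2))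
  have hfun : LhalfNeg = fun x => exp (-x / 2) *
      ((1 + x) * besselI0 (x / 2) + 2 * ((x / 2) * besselI1 (x / 2))) := by
    ext x; rw [LhalfNeg]; ring
  rw [hfun]
  exact hL.congr_deriv <| by
    simp only [Pfun, Function.comp_apply, Pi.add_apply, Pi.mul_apply, id]
    ring

lemma Qfun_lt_one {ρ : ℝ} (hρ : 0 ≤ ρ) : Qfun ρ < 1 := by
  have h := besselI_product_lt (x := ρ / 2) (by positivity)
  rw [show 2 * (ρ / 2) = ρ by ring] at h
  have hQ : Qfun ρ = π / 4 * exp (-ρ) * ((besselI0 (ρ / 2) + besselI1 (ρ / 2)) *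
      (besselI0 (ρ / 2) + ρ * (besselI0 (ρ / 2) + besselI1 (ρ / 2)))) := by
    have hexp : exp (-ρ) = exp (-ρ / 2) * exp (-ρ / 2) := by rw [← exp_add]; ring_nf
    rw [Qfun, Pfun, LhalfNeg, hexp]
    ring
  calc Qfun ρ < π / 4 * exp (-ρ) * (4 / π * exp ρ) := by rw [hQ]; gcongr
    _ = 1 := by
        rw [exp_neg]
        field_simp

lemma hasDerivAt_Ffun (ζ ν : ℝ) :
    HasDerivAt (Ffun ζ) (2 * ν * (1 - Qfun (ν ^ 2 + ζ ^ 2))) ν := by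
  have hρ : HasDerivAt (fun ν => ν ^ 2 + ζ ^ 2) (2 * ν) ν := by
    simpa using (hasDerivAt_pow 2 ν).add_const (ζ ^ 2)
  have hL := (hasDerivAt_LhalfNeg (ν ^ 2 + ζ ^ 2)).comp ν hρ
  exact (hρ.sub ((hL.pow 2).const_mul (π / 4))).congr_deriv <| by
    simp only [Qfun, Function.comp_apply]
    ring

theorem Ffun_unique_min_general (ζ : ℝ) :
    (∀ ν : ℝ, 0 ≤ ν → ν ≠ 0 → Ffun ζ 0 < Ffun ζ ν) ∧
    (∀ ν : ℝ, 0 < ν → 0 < deriv (Ffun ζ) ν) := by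
  have hderiv (ν : ℝ) (hν : 0 < ν) : 0 < deriv (Ffun ζ) ν := by
    rw [(hasDerivAt_Ffun ζ ν).deriv]
    have hQ : 0 < 1 - Qfun (ν ^ 2 + ζ ^ 2) := sub_pos.mpr (Qfun_lt_one (by positivity))
    positivity
  have hmono : StrictMonoOn (Ffun ζ) (Set.Ici 0) :=
    strictMonoOn_of_deriv_pos (convex_Ici 0)
      (fun ν _ => (hasDerivAt_Ffun ζ ν).continuousAt.continuousWithinAt)
      (by simpa only [interior_Ici, Set.mem_Ioi] using hderiv)
  exact ⟨fun ν hν hν0 => hmono Set.self_mem_Ici hν (lt_of_le_of_ne hν (Ne.symm hν0)), hderiv⟩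

theorem Ffun_unique_min (ζ : ℝ) (hζ : 0 < ζ) :
    (∀ ν : ℝ, 0 ≤ ν → ν ≠ 0 → Ffun ζ 0 < Ffun ζ ν) ∧
    (∀ ν : ℝ, 0 < ν → 0 < deriv (Ffun ζ) ν) :=
  Ffun_unique_min_general ζ
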